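/- arXiv:1611.08832 — 2 statements merged into one kernel-verified Lean document; each statement's English description precedes it below -/
import Mathlib

section
/- Suppose the linear program min c^T x subject to Ax ≥ b (with A ∈ Q^{m×n}, b ∈ Q^m, c ∈ Q^n) is feasible and has optimal value v ∈ Q. Then there exists d ∈ Q^m with d ≥ 0 such that d^T A = c^T and d^T b = v, i.e., the bound c^T x ≥ v can be inferred as a suitable linear combination of the constraints. -/
/-!
Farkas' lemma over an ordered field is proved by induction on the number of rows. If `c` is not
a nonnegative combination of the rows other than `α`, some `y₀` separates it from them, and then
`α ⬝ᵥ y₀ < 0`; projecting all vectors onto the hyperplane `y₀ᗮ` along `α` eliminates the row `α`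
while preserving the hypothesis, and the induction hypothesis lifts back with a nonnegative
coefficient on `α`.

Farkas' lemma for the homogenised system `[[A, -b], [0, 1]]` over `ℚ` yields rational multipliers
`d ≥ 0` with `dA = c` and `d ⬝ᵥ b ≥ v`, provided `c ⬝ᵥ x ≥ s v` whenever `s ≥ 0` and `Ax ≥ s b`.
That bound follows from real optimality: for `s > 0` rescale `x`, and for `s = 0` move the real
optimum along the recession direction `x`. Weak duality against the real optimum gives
`d ⬝ᵥ b ≤ v`.
-/

open Matrix

namespace Matrix

section Homogenization

variable {R κ ι : Type*} [CommRing R]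

def homogenization (A : Matrix κ ι R) (b : κ → R) : Matrix (κ ⊕ Unit) (ι ⊕ Unit) R :=
  fromBlocks A (replicateCol Unit (-b)) 0 1

lemma homogenization_mulVec [Fintype ι] (A : Matrix κ ι R) (b : κ → R) (x : ι → R) (s : R) :
    homogenization A b *ᵥ Sum.elim x (fun _ => s) = Sum.elim (A *ᵥ x - s • b) fun _ => s := by
  ext (i | i) <;> simp [homogenization, mulVec, dotProduct, replicateCol, sub_eq_add_neg, mul_comm]

lemma sumElim_vecMul_homogenization [Fintype κ] (A : Matrix κ ι R) (b d : κ → R) (μ : R) :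
    Sum.elim d (fun _ => μ) ᵥ* homogenization A b = Sum.elim (d ᵥ* A) fun _ => μ - d ⬝ᵥ b := by
  ext (j | j) <;> simp [homogenization, vecMul, dotProduct, replicateCol, sub_eq_add_neg, add_comm]

end Homogenization

lemma vecCons_nonneg {R : Type*} [Zero R] [LE R] {n : ℕ} {x : R} {v : Fin n → R} (hx : 0 ≤ x)
    (hv : 0 ≤ v) : 0 ≤ vecCons x v :=
  Fin.cases hx hv

section Farkas

variable {𝕜 ι : Type*} [Field 𝕜] [Fintype ι]

def projAlong (α y₀ w : ι → 𝕜) : ι → 𝕜 := w - (w ⬝ᵥ y₀ / α ⬝ᵥ y₀) • α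

lemma projAlong_dotProduct (α y₀ w y : ι → 𝕜) :
    projAlong α y₀ w ⬝ᵥ y = w ⬝ᵥ (y - (α ⬝ᵥ y / α ⬝ᵥ y₀) • y₀) := by
  simp only [projAlong, sub_dotProduct, dotProduct_sub, smul_dotProduct, dotProduct_smul,
    smul_eq_mul]
  ring

lemma dotProduct_sub_div_smul_self {α y₀ : ι → 𝕜} (hα : α ⬝ᵥ y₀ ≠ 0) (y : ι → 𝕜) :
    α ⬝ᵥ (y - (α ⬝ᵥ y / α ⬝ᵥ y₀) • y₀) = 0 := by
  rw [dotProduct_sub, dotProduct_smul, smul_eq_mul, div_mul_cancel₀ _ hα, sub_self]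

lemma vecMul_projAlong {m : ℕ} (α y₀ : ι → 𝕜) (B : Fin m → ι → 𝕜) (d : Fin m → 𝕜) :
    d ᵥ* of (fun i => projAlong α y₀ (B i)) = d ᵥ* of B - (d ⬝ᵥ (of B *ᵥ y₀) / α ⬝ᵥ y₀) • α := by
  have hrows : of (fun i => projAlong α y₀ (B i)) =
      of B - vecMulVec (fun i => B i ⬝ᵥ y₀ / α ⬝ᵥ y₀) α := by
    ext i j
    simp [projAlong, vecMulVec]
  rw [hrows, vecMul_sub, vecMul_vecMulVec]
  congr 2
  simp only [dotProduct, mulVec, of_apply, Finset.sum_div, mul_div_assoc]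

variable [LinearOrder 𝕜] [IsStrictOrderedRing 𝕜]

lemma projAlong_dotProduct_nonneg {m : ℕ} {α y₀ c : ι → 𝕜} {B : Fin m → ι → 𝕜}
    (h : ∀ y, 0 ≤ of (vecCons α B) *ᵥ y → 0 ≤ c ⬝ᵥ y) (hα : α ⬝ᵥ y₀ ≠ 0) (y : ι → 𝕜)
    (hy : 0 ≤ of (fun i => projAlong α y₀ (B i)) *ᵥ y) : 0 ≤ projAlong α y₀ c ⬝ᵥ y := by
  rw [projAlong_dotProduct]
  refine h _ ?_
  rw [cons_mulVec, dotProduct_sub_div_smul_self hα]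
  refine vecCons_nonneg le_rfl fun i => ?_
  simpa [mulVec, projAlong_dotProduct] using hy i

lemma exists_vecMul_cons_eq_of_vecMul_projAlong {m : ℕ} {α y₀ c : ι → 𝕜}
    {B : Fin m → ι → 𝕜} {d : Fin m → 𝕜} (hα : α ⬝ᵥ y₀ < 0) (hB : 0 ≤ of B *ᵥ y₀)
    (hc : c ⬝ᵥ y₀ ≤ 0) (hd : 0 ≤ d)
    (hdc : d ᵥ* of (fun i => projAlong α y₀ (B i)) = projAlong α y₀ c) :
    ∃ μ, 0 ≤ μ ∧ vecCons μ d ᵥ* of (vecCons α B) = c := by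
  refine ⟨(c ⬝ᵥ y₀ - d ⬝ᵥ (of B *ᵥ y₀)) / α ⬝ᵥ y₀, ?_, ?_⟩
  · have := dotProduct_nonneg_of_nonneg hd hB
    exact div_nonneg_of_nonpos (by linarith) hα.le
  · rw [vecMul_projAlong, projAlong] at hdc
    rw [cons_vecMul_cons, sub_div]
    linear_combination (norm := module) hdc

theorem exists_nonneg_vecMul_eq_of_mulVec_nonneg_fin :
    ∀ {m : ℕ} (A : Matrix (Fin m) ι 𝕜) (c : ι → 𝕜), (∀ y, 0 ≤ A *ᵥ y → 0 ≤ c ⬝ᵥ y) →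
      ∃ d, 0 ≤ d ∧ d ᵥ* A = c
  | 0, A, c, h => by
    have hc : 0 ≤ c ⬝ᵥ -c := h (-c) fun i => i.elim0
    rw [dotProduct_neg, neg_nonneg] at hc
    refine ⟨0, le_rfl, ?_⟩
    rw [zero_vecMul, eq_comm, ← dotProduct_self_eq_zero]
    exact hc.antisymm (Finset.sum_nonneg fun i _ => mul_self_nonneg (c i))
  | m + 1, A, c, h => by
    obtain ⟨α, B, rfl⟩ : ∃ α B, A = of (vecCons α B) :=
      ⟨A 0, vecTail A, by ext i j; refine Fin.cases ?_ (fun i => ?_) i <;> rfl⟩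
    by_cases hB : ∀ y, 0 ≤ of B *ᵥ y → 0 ≤ c ⬝ᵥ y
    · obtain ⟨d, hd, hdB⟩ := exists_nonneg_vecMul_eq_of_mulVec_nonneg_fin _ c hB
      refine ⟨vecCons 0 d, vecCons_nonneg le_rfl hd, ?_⟩
      rw [cons_vecMul_cons, zero_smul, zero_add, hdB]
    push Not at hB
    obtain ⟨y₀, hBy₀, hcy₀⟩ := hB
    have hα : α ⬝ᵥ y₀ < 0 := by
      by_contra! hα
      exact hcy₀.not_ge (h y₀ (by rw [cons_mulVec]; exact vecCons_nonneg hα hBy₀))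
    obtain ⟨d, hd, hdc⟩ := exists_nonneg_vecMul_eq_of_mulVec_nonneg_fin _ _
      (projAlong_dotProduct_nonneg h hα.ne)
    obtain ⟨μ, hμ, hμc⟩ := exists_vecMul_cons_eq_of_vecMul_projAlong hα hBy₀ hcy₀.le hd hdc
    exact ⟨vecCons μ d, vecCons_nonneg hμ hd, hμc⟩

theorem exists_nonneg_vecMul_eq_of_mulVec_nonneg {κ : Type*} [Fintype κ] (A : Matrix κ ι 𝕜)
    (c : ι → 𝕜) (h : ∀ y, 0 ≤ A *ᵥ y → 0 ≤ c ⬝ᵥ y) : ∃ d, 0 ≤ d ∧ d ᵥ* A = c := by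
  let e := Fintype.equivFin κ
  obtain ⟨d, hd, hdA⟩ := exists_nonneg_vecMul_eq_of_mulVec_nonneg_fin (A.submatrix e.symm id) c
    fun y hy => h y fun i => by simpa [mulVec] using hy (e i)
  refine ⟨d ∘ e, fun i => hd (e i), ?_⟩
  rw [← hdA, submatrix_vecMul_equiv]
  rfl

theorem exists_nonneg_vecMul_eq_le_dotProduct {κ : Type*} [Fintype κ] (A : Matrix κ ι 𝕜)
    (b : κ → 𝕜) (c : ι → 𝕜) (v : 𝕜)
    (h : ∀ x s, 0 ≤ s → s • b ≤ A *ᵥ x → s * v ≤ c ⬝ᵥ x) :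
    ∃ d, 0 ≤ d ∧ d ᵥ* A = c ∧ v ≤ d ⬝ᵥ b := by
  obtain ⟨d', hd', hdM⟩ := exists_nonneg_vecMul_eq_of_mulVec_nonneg (homogenization A b)
    (Sum.elim c fun _ => -v) fun y hy => by
      obtain ⟨x, s, rfl⟩ : ∃ x s, y = Sum.elim x fun _ => s :=
        ⟨y ∘ Sum.inl, y (Sum.inr ()), by ext (i | i) <;> rfl⟩
      rw [homogenization_mulVec, Sum.nonneg_elim_iff] at hy
      have := h x s (hy.2 ()) (sub_nonneg.1 hy.1)
      have hunit : (fun _ : Unit => -v) ⬝ᵥ (fun _ => s) = -v * s := Fintype.sum_unique _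
      rw [sumElim_dotProduct_sumElim, hunit]
      linarith
  obtain ⟨d, μ, rfl⟩ : ∃ d μ, d' = Sum.elim d fun _ => μ :=
    ⟨d' ∘ Sum.inl, d' (Sum.inr ()), by ext (i | i) <;> rfl⟩
  rw [sumElim_vecMul_homogenization, Sum.elim_eq_iff] at hdM
  have hμ : μ - d ⬝ᵥ b = -v := congrFun hdM.2 ()
  have : 0 ≤ μ := hd' (Sum.inr ())
  exact ⟨d, fun i => hd' (Sum.inl i), hdM.1, by linarith⟩

theorem mul_le_dotProduct_of_isLeast {κ : Type*} {A : Matrix κ ι 𝕜} {b : κ → 𝕜} {c : ι → 𝕜}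
    {v : 𝕜} (hv : IsLeast {w | ∃ x, b ≤ A *ᵥ x ∧ w = c ⬝ᵥ x} v) {x : ι → 𝕜} {s : 𝕜}
    (hs : 0 ≤ s) (hx : s • b ≤ A *ᵥ x) : s * v ≤ c ⬝ᵥ x := by
  obtain ⟨⟨x₀, hx₀, rfl⟩, hlb⟩ := hv
  rcases hs.eq_or_lt with rfl | hs
  · have hfeas : b ≤ A *ᵥ (x₀ + x) := by
      rw [mulVec_add]
      simpa using add_le_add hx₀ hx
    have := hlb ⟨x₀ + x, hfeas, rfl⟩
    rw [dotProduct_add] at this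
    linarith
  · have hfeas : b ≤ A *ᵥ (s⁻¹ • x) := by
      rw [mulVec_smul, ← inv_smul_smul₀ hs.ne' b]
      exact smul_le_smul_of_nonneg_left hx (inv_nonneg.2 hs.le)
    have := hlb ⟨s⁻¹ • x, hfeas, rfl⟩
    rwa [dotProduct_smul, smul_eq_mul, le_inv_mul_iff₀ hs] at this

end Farkas

theorem dotProduct_le_dotProduct_of_vecMul_eq {R κ ι : Type*} [Semiring R] [PartialOrder R]
    [IsOrderedRing R] [Fintype κ] [Fintype ι] {A : Matrix κ ι R} {b d : κ → R} {c x : ι → R}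
    (hd : 0 ≤ d) (hdA : d ᵥ* A = c) (hx : b ≤ A *ᵥ x) : d ⬝ᵥ b ≤ c ⬝ᵥ x := by
  rw [← hdA, ← dotProduct_mulVec]
  exact dotProduct_le_dotProduct_of_nonneg_left hx hd

section RatCast

variable {K κ ι : Type*} [DivisionRing K] [CharZero K]

theorem ratCast_dotProduct [Fintype ι] (u w : ι → ℚ) :
    ((u ⬝ᵥ w : ℚ) : K) = (fun i => (u i : K)) ⬝ᵥ fun i => (w i : K) :=
  RingHom.map_dotProduct (Rat.castHom K) u w

theorem ratCast_mulVec [Fintype ι] (A : Matrix κ ι ℚ) (x : ι → ℚ) (i : κ) :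
    ((A *ᵥ x) i : K) = (A.map (↑) *ᵥ fun j => (x j : K)) i :=
  RingHom.map_mulVec (Rat.castHom K) A x i

theorem ratCast_vecMul [Fintype κ] (A : Matrix κ ι ℚ) (d : κ → ℚ) (j : ι) :
    ((d ᵥ* A) j : K) = ((fun i => (d i : K)) ᵥ* A.map (↑)) j :=
  RingHom.map_vecMul (Rat.castHom K) A d j

end RatCast

end Matrix

theorem rational_lp_duality {n m : ℕ} (A : Matrix (Fin m) (Fin n) ℚ) (b : Fin m → ℚ)
    (c : Fin n → ℚ) (v : ℚ)
    (hopt : IsLeast {w : ℝ | ∃ x : Fin n → ℝ,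
        (∀ i, (b i : ℝ) ≤ (A.map (fun q : ℚ => (q : ℝ))).mulVec x i) ∧
        w = (fun j => (c j : ℝ)) ⬝ᵥ x} (v : ℝ)) :
    ∃ d : Fin m → ℚ, 0 ≤ d ∧ A.vecMul d = c ∧ d ⬝ᵥ b = v := by
  obtain ⟨d, hd, hdA, hvd⟩ := exists_nonneg_vecMul_eq_le_dotProduct A b c v fun x s hs hx => by
    have hxR : (s : ℝ) • (fun i => (b i : ℝ)) ≤ A.map (↑) *ᵥ fun j => (x j : ℝ) := fun i => by
      have hxi := hx i
      rw [Pi.smul_apply, smul_eq_mul] at hxi ⊢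
      rw [← ratCast_mulVec]
      exact_mod_cast hxi
    have := mul_le_dotProduct_of_isLeast hopt (by exact_mod_cast hs) hxR
    rw [← ratCast_dotProduct] at this
    exact_mod_cast this
  obtain ⟨x₀, hx₀, hv⟩ := hopt.1
  have hdAR : (fun i => (d i : ℝ)) ᵥ* A.map (↑) = fun j => (c j : ℝ) := funext fun j => by
    rw [← ratCast_vecMul, hdA]
  have hdb : ((d ⬝ᵥ b : ℚ) : ℝ) ≤ v := by
    rw [ratCast_dotProduct, hv]
    exact dotProduct_le_dotProduct_of_vecMul_eq (fun i => Rat.cast_nonneg.2 (hd i)) hdAR hx₀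
  exact ⟨d, hd, hdA, le_antisymm (by exact_mod_cast hdb) hvd⟩
end

section
/- Let F ⊆ R^n and suppose constraint lists are verified sequentially: if each derived inequality in a finite sequence is obtained from original constraints and previously derived inequalities by either (i) a suitable linear combination, (ii) rounding (when its coefficients are integral on I and zero elsewhere and all x ∈ F are integral on I), or (iii) unsplitting on a valid split disjunction, then every derived inequality whose assumption set is empty is valid for all x ∈ F. -/
open Matrix

/-- Derivation of an inequality `c.2 ≤ c.1 ⬝ᵥ x` from the constraints defining `F`,
under a set of assumptions (each an inequality `A.2 ≤ A.1 ⬝ᵥ x`), using the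
certificate inference rules: introducing assumptions, original (valid) constraints,
suitable linear combinations (addition and nonnegative scaling), rounding, and
unsplitting on a split disjunction supported on the integer variables `I`. -/
inductive Derives {n : ℕ} (F : Set (Fin n → ℝ)) (I : Finset (Fin n)) :
    Set ((Fin n → ℝ) × ℝ) → (Fin n → ℝ) × ℝ → Prop
  | assume (A : (Fin n → ℝ) × ℝ) : Derives F I {A} A
  | orig (c : (Fin n → ℝ) × ℝ) (h : ∀ x ∈ F, c.2 ≤ c.1 ⬝ᵥ x) : Derives F I ∅ c
  | add {S T : Set ((Fin n → ℝ) × ℝ)} {c d : (Fin n → ℝ) × ℝ} :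
      Derives F I S c → Derives F I T d →
      Derives F I (S ∪ T) (c.1 + d.1, c.2 + d.2)
  | scale {S : Set ((Fin n → ℝ) × ℝ)} {c : (Fin n → ℝ) × ℝ} (l : ℝ) (hl : 0 ≤ l) :
      Derives F I S c → Derives F I S (l • c.1, l * c.2)
  | round {S : Set ((Fin n → ℝ) × ℝ)} {c : (Fin n → ℝ) × ℝ}
      (hint : ∀ i ∈ I, ∃ z : ℤ, c.1 i = z) (h0 : ∀ i ∉ I, c.1 i = 0) :
      Derives F I S c → Derives F I S (c.1, (⌈c.2⌉ : ℝ))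
  | unsplit {S : Set ((Fin n → ℝ) × ℝ)} {c : (Fin n → ℝ) × ℝ}
      (a : Fin n → ℤ) (δ : ℤ) (ha : ∀ i ∉ I, a i = 0) :
      Derives F I (insert (-(fun i => (a i : ℝ)), (-δ : ℝ)) S) c →
      Derives F I (insert ((fun i => (a i : ℝ)), (δ : ℝ) + 1) S) c →
      Derives F I S c


lemma dot_int_aux {n : ℕ} {I : Finset (Fin n)} {c x : Fin n → ℝ}
    (h1 : ∀ i ∈ I, ∃ z : ℤ, c i = z) (h2 : ∀ i ∉ I, c i = 0)
    (hx : ∀ i ∈ I, ∃ z : ℤ, x i = z) : ∃ z : ℤ, c ⬝ᵥ x = z := by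
  classical
  set f : Fin n → ℤ := fun i => if h : i ∈ I then (h1 i h).choose else 0 with hf
  set g : Fin n → ℤ := fun i => if h : i ∈ I then (hx i h).choose else 0 with hg
  refine ⟨∑ i, f i * g i, ?_⟩
  rw [dotProduct]
  push_cast
  refine Finset.sum_congr rfl fun i _ => ?_
  by_cases hi : i ∈ I
  · simp only [hf, hg, dif_pos hi]
    exact congrArg₂ (· * ·) (h1 i hi).choose_spec (hx i hi).choose_spec
  · simp [hf, hg, dif_neg hi, h2 i hi]

lemma derives_sound {n : ℕ} {F : Set (Fin n → ℝ)} {I : Finset (Fin n)}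
    (hF : ∀ x ∈ F, ∀ i ∈ I, ∃ z : ℤ, x i = z)
    {S : Set ((Fin n → ℝ) × ℝ)} {c : (Fin n → ℝ) × ℝ} (h : Derives F I S c) :
    ∀ x ∈ F, (∀ A ∈ S, A.2 ≤ A.1 ⬝ᵥ x) → c.2 ≤ c.1 ⬝ᵥ x := by
  induction h with
  | assume A => exact fun x _ hS => hS A rfl
  | orig c hc => exact fun x hx _ => hc x hx
  | add h1 h2 ih1 ih2 =>
    intro x hx hS
    rw [add_dotProduct]
    exact add_le_add (ih1 x hx fun A hA => hS A (Or.inl hA))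
      (ih2 x hx fun A hA => hS A (Or.inr hA))
  | scale l hl h ih =>
    intro x hx hS
    rw [smul_dotProduct]
    exact mul_le_mul_of_nonneg_left (ih x hx hS) hl
  | round hint h0 h ih =>
    intro x hx hS
    obtain ⟨z, hz⟩ := dot_int_aux hint h0 (hF x hx)
    have := ih x hx hS
    dsimp only
    rw [hz] at this ⊢
    exact_mod_cast Int.ceil_le.mpr (by exact_mod_cast this)
  | unsplit a δ ha h1 h2 ih1 ih2 =>
    intro x hx hS
    obtain ⟨z, hz⟩ := dot_int_aux (c := fun i => ((a i : ℝ)))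
      (fun i _ => ⟨a i, rfl⟩) (fun i hi => by simp [ha i hi]) (hF x hx)
    rcases le_or_gt z δ with hle | hlt
    · refine ih1 x hx fun A hA => ?_
      rcases hA with rfl | hA
      · show (-δ : ℝ) ≤ _
        rw [neg_dotProduct, hz]
        exact_mod_cast neg_le_neg (by exact_mod_cast hle)
      · exact hS A hA
    · refine ih2 x hx fun A hA => ?_
      rcases hA with rfl | hA
      · show (δ : ℝ) + 1 ≤ _
        rw [hz]
        exact_mod_cast hlt
      · exact hS A hA

/-- Global soundness of the certificate format: any inequality derived with an empty
assumption set is valid for every point of the mixed-integer feasible region `F`. -/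
theorem certificate_soundness {n : ℕ} (F : Set (Fin n → ℝ)) (I : Finset (Fin n))
    (hF : ∀ x ∈ F, ∀ i ∈ I, ∃ z : ℤ, x i = z)
    (c : (Fin n → ℝ) × ℝ) (h : Derives F I ∅ c) :
    ∀ x ∈ F, c.2 ≤ c.1 ⬝ᵥ x := fun x hx => derives_sound hF h x hx (by simp)
end
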